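/- Fix S = k[x₀,…,xₙ, y₀,…,yₖ] and let (Δ, ℓ) be an lcm-labeled bipyramid over a k-simplex with base vertices v₀,…,vₖ and apexes w₀, w₁. If there exists j such that ℓ(vⱼ) divides lcm(ℓ(w₀), ℓ(w₁)), then for every monomial m, the subcomplex Δ_m is either empty or acyclic (all reduced homology over k vanishes). -/
import Mathlib


/-- A (combinatorial) simplicial complex: a downward-closed family of finite
subsets of the vertex type `V`. -/
def IsComplex {V : Type} (Δ : Finset V → Prop) : Prop :=
  ∀ σ τ : Finset V, τ ⊆ σ → Δ σ → Δ τ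

/-- The simplicial boundary operator on formal `k`-linear combinations of finite
subsets of `V`, with signs determined by the linear order on `V`. -/
noncomputable def bdry (V : Type) [DecidableEq V] [LinearOrder V]
    (k : Type) [Field k] : (Finset V →₀ k) →ₗ[k] (Finset V →₀ k) :=
  Finsupp.lsum k fun σ => LinearMap.toSpanSingleton k _
    (∑ v ∈ σ, ((-1 : k) ^ ((σ.filter (fun u => u < v)).card)) • Finsupp.single (σ.erase v) (1 : k))

/-- Vanishing of the reduced simplicial homology `H̃_{n-1}(Δ; k)`: chains in
chain degree `n` are supported on faces of cardinality `n` (so chain degree `n`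
corresponds to homological degree `n - 1`, and the empty face sits in chain
degree `0`).  The homology vanishes iff every cycle is a boundary. -/
def HredVanish {V : Type} [DecidableEq V] [LinearOrder V]
    (Δ : Finset V → Prop) (k : Type) [Field k] (n : ℕ) : Prop :=
  ∀ x ∈ Finsupp.supported k k {σ : Finset V | Δ σ ∧ σ.card = n},
    bdry V k x = 0 →
      ∃ y ∈ Finsupp.supported k k {σ : Finset V | Δ σ ∧ σ.card = n + 1},
        bdry V k y = x

variable {V : Type} [DecidableEq V] [LinearOrder V] (k : Type) [Field k]

noncomputable def coneMap (c : V) : (Finset V →₀ k) →ₗ[k] (Finset V →₀ k) :=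
  Finsupp.lsum k fun σ => LinearMap.toSpanSingleton k _
    (if c ∈ σ then 0 else ((-1:k)^((σ.filter (fun u => u < c)).card)) • Finsupp.single (insert c σ) 1)

lemma bdry_single (σ : Finset V) :
    bdry V k (Finsupp.single σ 1) =
      ∑ v ∈ σ, ((-1:k)^((σ.filter (fun u => u < v)).card)) • Finsupp.single (σ.erase v) 1 := by
  simp [bdry, Finsupp.lsum_single, LinearMap.toSpanSingleton_apply]

lemma coneMap_single (c : V) (σ : Finset V) :
    coneMap k c (Finsupp.single σ 1) =
      if c ∈ σ then 0 else ((-1:k)^((σ.filter (fun u => u < c)).card)) • Finsupp.single (insert c σ) 1 := by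
  simp [coneMap, Finsupp.lsum_single, LinearMap.toSpanSingleton_apply]

lemma homotopy_single (c : V) (σ : Finset V) :
    bdry V k (coneMap k c (Finsupp.single σ 1)) + coneMap k c (bdry V k (Finsupp.single σ 1))
      = Finsupp.single σ 1 := by
  by_cases hc : c ∈ σ
  · rw [coneMap_single, if_pos hc, map_zero, zero_add, bdry_single, map_sum]
    rw [Finset.sum_eq_single_of_mem c hc]
    · rw [map_smul, coneMap_single, if_neg (Finset.notMem_erase c σ),
        Finset.insert_erase hc, smul_smul, ← pow_add]
      have h1 : (σ.erase c).filter (fun u => u < c) = σ.filter (fun u => u < c) := by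
        ext u
        simp only [Finset.mem_filter, Finset.mem_erase]
        constructor
        · rintro ⟨⟨_, hu⟩, hlt⟩; exact ⟨hu, hlt⟩
        · rintro ⟨hu, hlt⟩; exact ⟨⟨ne_of_lt hlt, hu⟩, hlt⟩
      rw [h1, ← two_mul, pow_mul]
      norm_num
    · intro v hv hne
      rw [map_smul, coneMap_single, if_pos (Finset.mem_erase.2 ⟨(Ne.symm hne), hc⟩), smul_zero]
  · rw [coneMap_single, if_neg hc, map_smul, bdry_single, bdry_single, map_sum]
    have hsplit : ∑ v ∈ insert c σ, ((-1:k)^(((insert c σ).filter (fun u => u < v)).card)) • Finsupp.single ((insert c σ).erase v) (1:k)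
        = ((-1:k)^(((insert c σ).filter (fun u => u < c)).card)) • Finsupp.single ((insert c σ).erase c) (1:k)
          + ∑ v ∈ σ, ((-1:k)^(((insert c σ).filter (fun u => u < v)).card)) • Finsupp.single ((insert c σ).erase v) (1:k) :=
      Finset.sum_insert hc
    rw [hsplit]
    have hfc : (insert c σ).filter (fun u => u < c) = σ.filter (fun u => u < c) := by
      rw [Finset.filter_insert, if_neg (lt_irrefl c)]
    have hec : (insert c σ).erase c = σ := Finset.erase_insert hc
    rw [hfc, hec, smul_add, smul_smul, ← pow_add, ← two_mul, pow_mul]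
    norm_num
    rw [add_assoc, Finset.smul_sum, ← Finset.sum_add_distrib]
    have hzero : ∀ x ∈ σ, ((-1:k) ^ (Finset.filter (fun u => u < c) σ).card •
            Finsupp.single ((insert c σ).erase x) ((-1:k) ^ (Finset.filter (fun u => u < x) (insert c σ)).card))
          + (coneMap k c) (Finsupp.single (σ.erase x) ((-1:k) ^ (Finset.filter (fun u => u < x) σ).card)) = 0 := by
      intro x hx
      have hxc : x ≠ c := fun h => hc (h ▸ hx)
      have hcex : c ∉ σ.erase x := fun h => hc (Finset.mem_of_mem_erase h)
      have heq : (insert c σ).erase x = insert c (σ.erase x) :=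
        Finset.erase_insert_of_ne (Ne.symm hxc)
      have hcm : coneMap k c (Finsupp.single (σ.erase x) ((-1:k) ^ (Finset.filter (fun u => u < x) σ).card))
          = ((-1:k) ^ (Finset.filter (fun u => u < x) σ).card) • coneMap k c (Finsupp.single (σ.erase x) (1:k)) := by
        rw [← map_smul, Finsupp.smul_single, smul_eq_mul, mul_one]
      rw [hcm, coneMap_single, if_neg hcex, heq]
      rw [smul_smul, Finsupp.smul_single', Finsupp.smul_single', ← Finsupp.single_add,
        Finsupp.single_eq_zero]
      have fact1 : (Finset.filter (fun u => u < x) (insert c σ)).card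
          = (Finset.filter (fun u => u < x) σ).card + if c < x then 1 else 0 := by
        rw [Finset.filter_insert]
        split
        · rw [Finset.card_insert_of_notMem (fun h => hc (Finset.mem_filter.1 h).1)]
        · simp
      have fact2 : (Finset.filter (fun u => u < c) σ).card
          = (Finset.filter (fun u => u < c) (σ.erase x)).card + if x < c then 1 else 0 := by
        conv_lhs => rw [← Finset.insert_erase hx]
        rw [Finset.filter_insert]
        split
        · rw [Finset.card_insert_of_notMem
            (fun h => (Finset.notMem_erase x σ) (Finset.mem_filter.1 h).1)]
        · simp
      rw [fact1, fact2]
      rcases hxc.lt_or_gt with hlt | hlt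
      · rw [if_pos hlt, if_neg (not_lt.2 hlt.le)]
        ring_nf
      · rw [if_neg (not_lt.2 hlt.le), if_pos hlt]
        ring_nf
    rw [Finset.sum_eq_zero hzero, add_zero]

lemma homotopy (c : V) (x : Finset V →₀ k) :
    bdry V k (coneMap k c x) + coneMap k c (bdry V k x) = x := by
  have hL : (bdry V k ∘ₗ coneMap k c) + (coneMap k c ∘ₗ bdry V k) = LinearMap.id := by
    apply Finsupp.lhom_ext
    intro σ b
    have hb : Finsupp.single σ b = b • Finsupp.single σ (1:k) := by
      rw [Finsupp.smul_single', mul_one]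
    simp only [LinearMap.add_apply, LinearMap.comp_apply, LinearMap.id_apply, hb,
      map_smul, ← smul_add]
    rw [homotopy_single]
  have := congrArg (fun L => L x) hL
  simpa using this

lemma cone_HredVanish (Δ : Finset V → Prop) (c : V)
    (hcone : ∀ σ, Δ σ → (Δ (insert c σ))) (n : ℕ) : HredVanish Δ k n := by
  intro x hx hbx
  refine ⟨coneMap k c x, ?_, ?_⟩
  · rw [Finsupp.mem_supported] at hx ⊢
    have hx' : coneMap k c x = ∑ σ ∈ x.support, coneMap k c (Finsupp.single σ (x σ)) := by
      conv_lhs => rw [← Finsupp.sum_single x]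
      rw [Finsupp.sum, map_sum]
    rw [hx']
    intro τ hτ
    obtain ⟨σ, hσ, hτ'⟩ := Finset.mem_biUnion.1 (Finsupp.support_finset_sum hτ)
    have hΔσ : Δ σ ∧ σ.card = n := hx hσ
    have hone : Finsupp.single σ (x σ) = (x σ) • Finsupp.single σ (1:k) := by
      rw [Finsupp.smul_single', mul_one]
    rw [hone, map_smul, coneMap_single] at hτ'
    by_cases hcσ : c ∈ σ
    · rw [if_pos hcσ, smul_zero] at hτ'
      simp at hτ'
    · rw [if_neg hcσ, smul_smul] at hτ'
      have := Finsupp.support_single_subset (Finsupp.support_smul hτ')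
      rw [Finset.mem_singleton] at this
      subst this
      exact ⟨hcone σ hΔσ.1, by rw [Finset.card_insert_of_notMem hcσ, hΔσ.2]⟩
  · have h := homotopy k c x
    rw [hbx, map_zero, add_zero] at h
    exact h

namespace Stmt15

/-- Apexes of the bipyramid over a `k`-simplex on vertex set `Fin (k+3)`:
base vertices are `0, …, k`, apexes are `k+1` and `k+2`. -/
def w₀ (k : ℕ) : Fin (k + 3) := ⟨k + 1, by omega⟩

def w₁ (k : ℕ) : Fin (k + 3) := ⟨k + 2, by omega⟩

def base (k : ℕ) (j : Fin (k + 1)) : Fin (k + 3) := ⟨(j : ℕ), by omega⟩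

/-- The subcomplex `Δ_μ` of the lcm-labeled bipyramid with vertex labels `lab`:
faces not containing both apexes, all of whose vertex labels divide the
monomial `μ`.  Monomials of `S = K[x₀,…,xₙ,y₀,…,y_k]` are encoded by exponent
vectors on `Fin (n+1) ⊕ Fin (k+1)`. -/
def Dm (n k : ℕ) (lab : Fin (k + 3) → (Fin (n + 1) ⊕ Fin (k + 1)) → ℕ)
    (μ : (Fin (n + 1) ⊕ Fin (k + 1)) → ℕ) (σ : Finset (Fin (k + 3))) : Prop :=
  ¬ ({w₀ k, w₁ k} : Finset (Fin (k + 3))) ⊆ σ ∧ ∀ a ∈ σ, ∀ t, lab a t ≤ μ t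

/-- Let `(Δ, ℓ)` be an lcm-labeled bipyramid over a `k`-simplex with base
vertices `v₀,…,v_k` and apexes `w₀, w₁`, over `S = K[x₀,…,xₙ,y₀,…,y_k]`.  If
some base-vertex label `ℓ(vⱼ)` divides `lcm(ℓ(w₀), ℓ(w₁))`, then for every
monomial `m` the subcomplex `Δ_m` is either empty (has no vertices) or acyclic
(all reduced homology over `K` vanishes). -/
theorem subcomplex_empty_or_acyclic (K : Type) [Field K] (n k : ℕ) (hkn : k ≤ n)
    (lab : Fin (k + 3) → (Fin (n + 1) ⊕ Fin (k + 1)) → ℕ)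
    (hj : ∃ j : Fin (k + 1), ∀ t, lab (base k j) t ≤ max (lab (w₀ k) t) (lab (w₁ k) t)) :
    ∀ m : (Fin (n + 1) ⊕ Fin (k + 1)) → ℕ,
      (∀ a : Fin (k + 3), ¬ Dm n k lab m {a}) ∨
        ∀ nn : ℕ, HredVanish (Dm n k lab m) K nn := by
  intro m
  by_cases hvert : ∀ a : Fin (k + 3), ¬ Dm n k lab m {a}
  · exact Or.inl hvert
  right
  push_neg at hvert
  obtain ⟨a₀, ha₀⟩ := hvert
  obtain ⟨j, hjle⟩ := hj
  intro nn
  by_cases happ : (∀ t, lab (w₀ k) t ≤ m t) ∧ (∀ t, lab (w₁ k) t ≤ m t)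
  · apply cone_HredVanish K _ (base k j)
    intro σ hσ
    have hb0 : base k j ≠ w₀ k := by
      simp only [base, w₀, ne_eq, Fin.mk.injEq]
      omega
    have hb1 : base k j ≠ w₁ k := by
      simp only [base, w₁, ne_eq, Fin.mk.injEq]
      omega
    constructor
    · intro hsub
      apply hσ.1
      intro a ha
      have ha2 := hsub ha
      rcases Finset.mem_insert.1 ha2 with h | h
      · exfalso
        rcases Finset.mem_insert.1 ha with rfl | ha3
        · exact hb0 h.symm
        · exact hb1 ((Finset.mem_singleton.1 ha3) ▸ h).symm
      · exact h
    · intro a ha t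
      rcases Finset.mem_insert.1 ha with rfl | ha'
      · exact le_trans (hjle t) (max_le (happ.1 t) (happ.2 t))
      · exact hσ.2 a ha' t
  · have hbad : ∃ w ∈ ({w₀ k, w₁ k} : Finset (Fin (k + 3))), ∃ t, ¬ lab w t ≤ m t := by
      rw [not_and_or] at happ
      rcases happ with h | h
      · push_neg at h
        obtain ⟨t, ht⟩ := h
        exact ⟨w₀ k, Finset.mem_insert_self _ _, t, by omega⟩
      · push_neg at h
        obtain ⟨t, ht⟩ := h
        exact ⟨w₁ k, by simp, t, by omega⟩
    obtain ⟨w, hw, t, hwt⟩ := hbad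
    apply cone_HredVanish K _ a₀
    intro σ hσ
    have ha₀lab : ∀ t, lab a₀ t ≤ m t := ha₀.2 a₀ (Finset.mem_singleton_self a₀)
    constructor
    · intro hsub
      have hwmem : w ∈ insert a₀ σ := hsub hw
      rcases Finset.mem_insert.1 hwmem with rfl | hwσ
      · exact hwt (ha₀lab t)
      · exact hwt (hσ.2 w hwσ t)
    · intro a ha tt
      rcases Finset.mem_insert.1 ha with rfl | ha'
      · exact ha₀lab tt
      · exact hσ.2 a ha' tt


end Stmt15
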